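/- arXiv:1404.7491 — 2 statements merged into one kernel-verified Lean document; each statement's English description precedes it below -/
import Mathlib

section
/- For all nonnegative integers m and x, the Meixner polynomial satisfies the three-term recurrence (c−1)·x·M_m(x; α, c) = c·(m+α)·M_{m+1}(x; α, c) − (m + (m+α)·c)·M_m(x; α, c) + m·M_{m−1}(x; α, c), where the last term is 0 when m = 0. -/
noncomputable def poch (α : ℝ) (k : ℕ) : ℝ := ∏ i ∈ Finset.range k, (α + i)

noncomputable def Meixner (m x : ℕ) (α c : ℝ) : ℝ :=
  ∑ k ∈ Finset.range (m + 1),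
    ((k.factorial : ℝ) / poch α k) * (m.choose k) * (x.choose k) * (1 - 1 / c) ^ k

/-!
`M_m(x)` is the binomial transform `∑ₖ C(m,k) bₖ` of `bₖ = k!/(α)ₖ · C(x,k) · (1 - 1/c)ᵏ`, and `b`
satisfies the first-order recurrence `c (α + k) b_{k+1} = (c - 1)(x - k) bₖ`. Under the transform,
Pascal's rule turns the shift `k ↦ k + 1` into the difference `M_{m+1} - M_m`, and the absorption
identity `k C(m,k) = m C(m-1,k-1)` turns multiplication by `k` into `m (M_m - M_{m-1})`. Transforming
the recurrence of `b` therefore gives the three-term recurrence in `m`.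
-/

open Finset

section BinomialTransform

variable {M : Type*} [AddCommMonoid M]

def binomialTransform (f : ℕ → M) (m : ℕ) : M :=
  ∑ k ∈ range (m + 1), m.choose k • f k

theorem binomialTransform_succ (f : ℕ → M) (m : ℕ) :
    binomialTransform f (m + 1) =
      binomialTransform f m + binomialTransform (fun k => f (k + 1)) m :=
  sum_choose_succ_nsmul (fun i _ => f i) m

theorem binomialTransform_nsmul_self_succ (f : ℕ → M) (m : ℕ) :
    binomialTransform (fun k => k • f k) (m + 1) =
      (m + 1) • binomialTransform (fun k => f (k + 1)) m := by
  rw [binomialTransform, sum_range_succ', binomialTransform, smul_sum]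
  simp only [zero_smul, smul_zero, add_zero, smul_smul]
  refine sum_congr rfl fun k _ => ?_
  rw [← Nat.add_one_mul_choose_eq, mul_comm]

theorem binomialTransform_nsmul_self_add (f : ℕ → M) (m : ℕ) :
    binomialTransform (fun k => k • f k) m + m • binomialTransform f (m - 1) =
      m • binomialTransform f m := by
  cases m with
  | zero => simp [binomialTransform]
  | succ n =>
    rw [binomialTransform_nsmul_self_succ, Nat.add_sub_cancel, binomialTransform_succ,
      smul_add, add_comm]

end BinomialTransform

noncomputable def meixnerTerm (α c : ℝ) (x k : ℕ) : ℝ :=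
  ((k.factorial : ℝ) / poch α k) * (x.choose k) * (1 - 1 / c) ^ k

theorem Meixner_eq_binomialTransform (m x : ℕ) (α c : ℝ) :
    Meixner m x α c = binomialTransform (meixnerTerm α c x) m := by
  refine sum_congr rfl fun k _ => ?_
  rw [nsmul_eq_mul, meixnerTerm]
  ring

theorem Nat.cast_choose_succ_mul (R : Type*) [CommRing R] (n k : ℕ) :
    (n.choose (k + 1) : R) * (k + 1) = n.choose k * (n - k) := by
  rcases le_or_gt k n with h | h
  · have := congrArg (Nat.cast : ℕ → R) (Nat.choose_succ_right_eq n k)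
    push_cast [h] at this
    exact this
  · simp [Nat.choose_eq_zero_of_lt h, Nat.choose_eq_zero_of_lt (Nat.lt_succ_of_lt h)]

theorem meixnerTerm_succ {α c : ℝ} (hc : c ≠ 0) {k : ℕ} (hk : α + k ≠ 0) (x : ℕ) :
    c * (α + k) * meixnerTerm α c x (k + 1) = (c - 1) * (x - k) * meixnerTerm α c x k := by
  have hchoose := Nat.cast_choose_succ_mul ℝ x k
  have hpoch : (α + k) * ((k + 1).factorial / poch α (k + 1) : ℝ) =
      (k + 1) * (k.factorial / poch α k) := by
    rw [poch, prod_range_succ, Nat.factorial_succ, ← poch, mul_div_assoc', mul_comm (poch α k),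
      ← div_div, mul_div_cancel_left₀ _ hk]
    push_cast
    ring
  have hc' : c * (1 - 1 / c) = c - 1 := by field_simp
  simp only [meixnerTerm, pow_succ]
  linear_combination (x.choose (k + 1) * (1 - 1 / c) ^ k * (c * (1 - 1 / c))) * hpoch
    + (k.factorial / poch α k * (1 - 1 / c) ^ k * (x.choose (k + 1) * (k + 1))) * hc'
    + ((c - 1) * (k.factorial / poch α k) * (1 - 1 / c) ^ k) * hchoose

theorem meixner_recurrence (α : ℝ) (hα : ∀ k : ℕ, α ≠ -(k : ℝ)) (c : ℝ)
    (hc : c ≠ 0) (m x : ℕ) :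
    (c - 1) * x * Meixner m x α c =
      c * ((m : ℝ) + α) * Meixner (m + 1) x α c
        - ((m : ℝ) + ((m : ℝ) + α) * c) * Meixner m x α c
        + (m : ℝ) * Meixner (m - 1) x α c := by
  simp only [Meixner_eq_binomialTransform]
  set b := meixnerTerm α c x
  set h : ℕ → ℝ := fun k => k * b k
  -- `k b_{k+1} = (k+1) b_{k+1} - b_{k+1}`: every term becomes a shift or a `k`-multiple of `b`
  have hb : ∀ k : ℕ, (c - 1) * x * b k =
      c * α * b (k + 1) + c * h (k + 1) - c * b (k + 1) + (c - 1) * h k := by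
    intro k
    have : c * (α + k) * b (k + 1) = (c - 1) * (x - k) * b k :=
      meixnerTerm_succ hc (fun h0 => hα k (eq_neg_of_add_eq_zero_left h0)) x
    simp only [h]
    push_cast
    linear_combination -this
  have hlin : (c - 1) * x * binomialTransform b m =
      c * α * binomialTransform (fun k => b (k + 1)) m
        + c * binomialTransform (fun k => h (k + 1)) m
        - c * binomialTransform (fun k => b (k + 1)) m + (c - 1) * binomialTransform h m := by
    simp only [binomialTransform, mul_sum, ← sum_add_distrib, ← sum_sub_distrib]
    refine sum_congr rfl fun k _ => ?_
    simp only [nsmul_eq_mul]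
    linear_combination (m.choose k : ℝ) * hb k
  have hb_succ := binomialTransform_succ b m
  have hh_succ := binomialTransform_succ h m
  have hh : binomialTransform h m + m * binomialTransform b (m - 1) =
      m * binomialTransform b m := by
    simpa only [nsmul_eq_mul] using binomialTransform_nsmul_self_add b m
  have hh' : binomialTransform h (m + 1) + (m + 1) * binomialTransform b m =
      (m + 1) * binomialTransform b (m + 1) := by
    simpa only [nsmul_eq_mul, Nat.add_sub_cancel, Nat.cast_succ] using
      binomialTransform_nsmul_self_add b (m + 1)
  linear_combination hlin - (c * α - c) * hb_succ - c * hh_succ + c * hh' - hh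
end

section
/- For 0 < c < 1, α not a nonpositive integer, and complex w, z with |w|, |z| sufficiently small (e.g. |w|, |z| < ε where ε as in the paper satisfies (c+(1−c)ε/(1−ε))(1+(1−c)ε/(1−cε)) < 1), the identity (1−wz)^{−α} = (1−c)^{α} · Σ_{x≥0} ((α)_x/x!)·c^x · (Σ_{m≥0} ((α)_m/m!)·M_m(x; α, c)·z^m) · (1−cw)^{−α}·((1−w)/(1−cw))^x holds, with absolute convergence of the double series. -/
open Complex

noncomputable def pochC (α : ℂ) (k : ℕ) : ℂ := ∏ i ∈ Finset.range k, (α + i)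

noncomputable def MeixnerC (m x : ℕ) (α c : ℂ) : ℂ :=
  ∑ k ∈ Finset.range (m + 1),
    ((k.factorial : ℂ) / pochC α k) * (m.choose k) * (x.choose k) * (1 - 1 / c) ^ k

/-!
Expanding `M_m(x)` and summing the shifted binomial series
`∑_m (α)_m/m! · C(m,k) · z^m = (α)_k/k! · z^k · (1-z)^(-α-k)` gives the Meixner generating function
`∑_m (α)_m/m! · M_m(x) · z^m = (1-z)^(-α) · ((1-z/c)/(1-z))^x`. The outer series is then the
binomial series of `(1-T)^(-α)` with `T = (c-z)(1-w)/((1-z)(1-cw))`, and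
`(1-z)(1-cw)(1-T) = (1-c)(1-wz)`; the principal powers combine because every factor lies in the
right half-plane. Absolute convergence comes from the same computation on majorants, with `‖α‖`,
`‖1 - 1/c‖` and `ε` in place of `α`, `1 - 1/c` and `‖z‖`: the outer majorant is a binomial series
in `(c + (1-c)ε/(1-ε)) · ‖(1-w)/(1-cw)‖`, which is where the condition on `ε` enters.
-/

open Finset

noncomputable def pochR (b : ℝ) (k : ℕ) : ℝ := ∏ i ∈ range k, (b + i)

lemma prod_range_add_div_factorial_eq_choose {K : Type*} [Field K] [CharZero K] (β : K) (n : ℕ) :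
    (∏ i ∈ range n, (β + i)) / n.factorial = Ring.choose (β + n - 1) n := by
  rw [← Ring.multichoose_eq, eq_comm, eq_div_iff (by exact_mod_cast n.factorial_ne_zero),
    mul_comm, ← nsmul_eq_mul, Ring.factorial_nsmul_multichoose_eq_ascPochhammer,
    Polynomial.ascPochhammer_smeval_eq_eval]
  induction n with
  | zero => simp
  | succ n ih => rw [ascPochhammer_succ_eval, ih, prod_range_succ]

lemma pochC_add (β : ℂ) (k j : ℕ) : pochC β (k + j) = pochC β k * pochC (β + k) j := by
  simp only [pochC, prod_range_add, Nat.cast_add, add_assoc]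

lemma pochC_ne_zero {β : ℂ} (hβ : ∀ i : ℕ, β + i ≠ 0) (k : ℕ) : pochC β k ≠ 0 :=
  prod_ne_zero_iff.mpr fun i _ => hβ i

lemma pochR_nonneg {b : ℝ} (hb : 0 ≤ b) (k : ℕ) : 0 ≤ pochR b k :=
  prod_nonneg fun i _ => by positivity

lemma norm_pochC_le_pochR {β : ℂ} {b : ℝ} (hb : ‖β‖ ≤ b) (k : ℕ) : ‖pochC β k‖ ≤ pochR b k := by
  rw [pochC, pochR, norm_prod]
  gcongr with i
  calc ‖β + i‖ ≤ ‖β‖ + i := by simpa using norm_add_le β i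
    _ ≤ b + i := by linarith

lemma pochC_add_div_factorial_mul_choose (α : ℂ) (j k : ℕ) :
    pochC α (j + k) / (j + k).factorial * (j + k).choose k
      = pochC α k / k.factorial * (pochC (α + k) j / j.factorial) := by
  have h : ((j + k).choose k : ℂ) * j.factorial * k.factorial = (j + k).factorial := by
    exact_mod_cast Nat.add_choose_mul_factorial_mul_factorial j k
  have hsplit : pochC α (j + k) = pochC α k * pochC (α + k) j := by rw [add_comm, pochC_add]
  have hchoose : ((j + k).choose k : ℂ) ≠ 0 := by
    exact_mod_cast (Nat.choose_pos (Nat.le_add_left k j)).ne'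
  rw [hsplit, ← h]
  field_simp

theorem hasSum_pochC_div_factorial_mul_pow (β : ℂ) {u : ℂ} (hu : ‖u‖ < 1) :
    HasSum (fun n => pochC β n / n.factorial * u ^ n) ((1 - u) ^ (-β)) := by
  have := (one_div_one_sub_cpow_hasFPowerSeriesOnBall_zero β).hasSum
    (y := u) (by rwa [Metric.mem_eball, edist_zero_right, ← ofReal_norm, ENNReal.ofReal_lt_one])
  simpa [FormalMultilinearSeries.ofScalars_apply_eq, pochC, prod_range_add_div_factorial_eq_choose,
    cpow_neg, mul_comm] using this

theorem hasSum_pochR_div_factorial_mul_pow (b : ℝ) {r : ℝ} (hr : |r| < 1) :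
    HasSum (fun n => pochR b n / n.factorial * r ^ n) ((1 - r) ^ (-b)) := by
  have := (Real.one_div_one_sub_rpow_hasFPowerSeriesOnBall_zero b).hasSum
    (y := r) (by rwa [Metric.mem_eball, edist_zero_right, ← ofReal_norm, ENNReal.ofReal_lt_one])
  simpa [FormalMultilinearSeries.ofScalars_apply_eq, pochR, prod_range_add_div_factorial_eq_choose,
    Real.rpow_neg (by linarith [le_abs_self r] : (0:ℝ) ≤ 1 - r), mul_comm] using this

lemma hasSum_nat_add_iff_of_eq_zero {E : Type*} [AddCommMonoid E] [TopologicalSpace E]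
    {f : ℕ → E} {k : ℕ} (hf : ∀ m < k, f m = 0) {a : E} :
    HasSum (fun j => f (j + k)) a ↔ HasSum f a :=
  (add_left_injective k).hasSum_iff fun m hm =>
    hf m (not_le.mp fun hkm => hm ⟨m - k, Nat.sub_add_cancel hkm⟩)

theorem hasSum_pochC_div_factorial_mul_choose_mul_pow (α : ℂ) (k : ℕ) {z : ℂ} (hz : ‖z‖ < 1) :
    HasSum (fun m => pochC α m / m.factorial * m.choose k * z ^ m)
      (pochC α k / k.factorial * z ^ k * (1 - z) ^ (-(α + k))) := by
  refine (hasSum_nat_add_iff_of_eq_zero (k := k)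
    fun m hm => by simp [Nat.choose_eq_zero_of_lt hm]).mp ?_
  refine ((hasSum_pochC_div_factorial_mul_pow (α + k) hz).mul_left
    (pochC α k / k.factorial * z ^ k)).congr_fun fun j => ?_
  rw [pochC_add_div_factorial_mul_choose, pow_add]
  ring

theorem summable_and_tsum_norm_pochC_mul_choose_le (α : ℂ) (k : ℕ) {z : ℂ} {r : ℝ}
    (hzr : ‖z‖ ≤ r) (hr : r < 1) :
    Summable (fun m => ‖pochC α m / m.factorial * m.choose k * z ^ m‖) ∧
      ∑' m, ‖pochC α m / m.factorial * m.choose k * z ^ m‖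
        ≤ ‖pochC α k‖ / k.factorial * r ^ k * (1 - r) ^ (-(‖α‖ + k)) := by
  set f : ℕ → ℝ := fun m => ‖pochC α m / m.factorial * m.choose k * z ^ m‖
  have hr0 : 0 ≤ r := (norm_nonneg z).trans hzr
  have hmaj : ∀ j, f (j + k)
      ≤ ‖pochC α k‖ / k.factorial * r ^ k * (pochR (‖α‖ + k) j / j.factorial * r ^ j) := by
    intro j
    have hpoch := norm_pochC_le_pochR (β := α + k) (b := ‖α‖ + k) (by simpa using norm_add_le α k) j
    have := pochR_nonneg (by positivity : 0 ≤ ‖α‖ + k) j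
    calc f (j + k)
        = ‖pochC α k‖ / k.factorial * ‖z‖ ^ k * (‖pochC (α + k) j‖ / j.factorial * ‖z‖ ^ j) := by
          simp only [f]
          rw [pochC_add_div_factorial_mul_choose, pow_add]
          simp only [norm_mul, norm_div, norm_pow, norm_natCast]
          ring
      _ ≤ _ := by gcongr
  have hv := (hasSum_pochR_div_factorial_mul_pow (‖α‖ + k) (abs_lt.mpr ⟨by linarith, hr⟩)).mul_left
    (‖pochC α k‖ / k.factorial * r ^ k)
  have hshift : Summable fun j => f (j + k) :=
    hv.summable.of_nonneg_of_le (fun _ => norm_nonneg _) hmaj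
  have hf := (hasSum_nat_add_iff_of_eq_zero (f := f)
    fun m hm => by simp [f, Nat.choose_eq_zero_of_lt hm]).mp hshift.hasSum
  exact ⟨hf.summable, hf.tsum_eq ▸ hasSum_le hmaj hshift.hasSum hv⟩

lemma re_one_sub_pos {u : ℂ} (hu : ‖u‖ < 1) : 0 < (1 - u).re := by
  simpa using (re_le_norm u).trans_lt hu

section Meixner

variable {α : ℂ} (c : ℂ) (x : ℕ) {z : ℂ}

lemma pochC_div_factorial_mul_meixnerC_mul_pow_eq_sum (m : ℕ) :
    pochC α m / m.factorial * MeixnerC m x α c * z ^ m =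
      ∑ k ∈ range (x + 1), x.choose k * (1 - 1 / c) ^ k * (k.factorial / pochC α k)
        * (pochC α m / m.factorial * m.choose k * z ^ m) := by
  set t : ℕ → ℂ := fun k => x.choose k * (1 - 1 / c) ^ k * (k.factorial / pochC α k)
    * (pochC α m / m.factorial * m.choose k * z ^ m)
  have extend : ∀ n ≤ m + x, (∀ k, n < k → t k = 0) →
      ∑ k ∈ range (n + 1), t k = ∑ k ∈ range (m + x + 1), t k := fun n hn ht =>
    sum_subset (range_subset_range.mpr (by omega)) fun k _ hk =>
      ht k (by simpa using hk)
  calc pochC α m / m.factorial * MeixnerC m x α c * z ^ m = ∑ k ∈ range (m + 1), t k := by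
        simp only [t, MeixnerC, mul_sum, sum_mul]
        exact sum_congr rfl fun k _ => by ring
    _ = ∑ k ∈ range (x + 1), t k := by
        rw [extend m (by omega) fun k hk => by simp [t, Nat.choose_eq_zero_of_lt hk],
          extend x (by omega) fun k hk => by simp [t, Nat.choose_eq_zero_of_lt hk]]

theorem hasSum_meixnerC (hα : ∀ i : ℕ, α + i ≠ 0) (hz : ‖z‖ < 1) :
    HasSum (fun m => pochC α m / m.factorial * MeixnerC m x α c * z ^ m)
      ((1 - z) ^ (-α) * ((1 - z / c) / (1 - z)) ^ x) := by
  have hz0 := ne_zero_of_re_pos (re_one_sub_pos hz)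
  have hpiece : ∀ k ∈ range (x + 1), HasSum (fun m => x.choose k * (1 - 1 / c) ^ k
      * (k.factorial / pochC α k) * (pochC α m / m.factorial * m.choose k * z ^ m))
      (((1 - 1 / c) * z / (1 - z)) ^ k * x.choose k * (1 - z) ^ (-α)) := by
    intro k _
    have := pochC_ne_zero hα k
    have hval : ((1 - 1 / c) * z / (1 - z)) ^ k * x.choose k * (1 - z) ^ (-α) =
        x.choose k * (1 - 1 / c) ^ k * (k.factorial / pochC α k)
          * (pochC α k / k.factorial * z ^ k * (1 - z) ^ (-(α + k))) := by
      have : (k.factorial : ℂ) ≠ 0 := Nat.cast_ne_zero.mpr k.factorial_ne_zero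
      rw [neg_add, cpow_add _ _ hz0, cpow_neg (1 - z) k, cpow_natCast, div_pow, mul_pow]
      field_simp
    rw [hval]
    exact (hasSum_pochC_div_factorial_mul_choose_mul_pow α k hz).mul_left _
  convert hasSum_sum hpiece using 1
  · exact funext (pochC_div_factorial_mul_meixnerC_mul_pow_eq_sum c x)
  · rw [← sum_mul, mul_comm, show (1 - z / c) / (1 - z) = (1 - 1 / c) * z / (1 - z) + 1 by
      field_simp; ring, add_pow]
    simp only [one_pow, mul_one]

theorem summable_and_tsum_norm_meixnerC_le (hα : ∀ i : ℕ, α + i ≠ 0) {r : ℝ} (hzr : ‖z‖ ≤ r)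
    (hr : r < 1) :
    Summable (fun m => ‖pochC α m / m.factorial * MeixnerC m x α c * z ^ m‖) ∧
      ∑' m, ‖pochC α m / m.factorial * MeixnerC m x α c * z ^ m‖
        ≤ (1 - r) ^ (-‖α‖) * (1 + ‖1 - 1 / c‖ * r / (1 - r)) ^ x := by
  have hr1 : 0 < 1 - r := by linarith
  set p : ℕ → ℕ → ℝ := fun k m => ‖x.choose k * (1 - 1 / c) ^ k * (k.factorial / pochC α k)
    * (pochC α m / m.factorial * m.choose k * z ^ m)‖
  have hle : ∀ m, ‖pochC α m / m.factorial * MeixnerC m x α c * z ^ m‖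
      ≤ ∑ k ∈ range (x + 1), p k m := fun m => by
    rw [pochC_div_factorial_mul_meixnerC_mul_pow_eq_sum]
    exact norm_sum_le _ _
  have hp : ∀ k, Summable (p k) ∧
      ∑' m, p k m ≤ (‖1 - 1 / c‖ * r / (1 - r)) ^ k * x.choose k * (1 - r) ^ (-‖α‖) := by
    intro k
    obtain ⟨hs, ht⟩ := summable_and_tsum_norm_pochC_mul_choose_le α k hzr hr
    have hpoch : 0 < ‖pochC α k‖ := norm_pos_iff.mpr (pochC_ne_zero hα k)
    have hpk : p k = fun m => x.choose k * ‖1 - 1 / c‖ ^ k * (k.factorial / ‖pochC α k‖)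
        * ‖pochC α m / m.factorial * m.choose k * z ^ m‖ := by
      funext m
      simp only [p, norm_mul, norm_div, norm_pow, norm_natCast]
    rw [hpk, tsum_mul_left]
    refine ⟨hs.mul_left _, ?_⟩
    calc _ ≤ x.choose k * ‖1 - 1 / c‖ ^ k * (k.factorial / ‖pochC α k‖)
          * (‖pochC α k‖ / k.factorial * r ^ k * (1 - r) ^ (-(‖α‖ + k))) := by gcongr
      _ = _ := by
        rw [neg_add, Real.rpow_add hr1, Real.rpow_neg hr1.le (k : ℝ), Real.rpow_natCast,
          div_pow, mul_pow]
        field_simp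
  have hsum : Summable fun m => ∑ k ∈ range (x + 1), p k m := summable_sum fun k _ => (hp k).1
  have hS := hsum.of_nonneg_of_le (fun _ => norm_nonneg _) hle
  refine ⟨hS, ?_⟩
  calc _ ≤ ∑' m, ∑ k ∈ range (x + 1), p k m := hS.tsum_le_tsum hle hsum
    _ = ∑ k ∈ range (x + 1), ∑' m, p k m := Summable.tsum_finsetSum fun k _ => (hp k).1
    _ ≤ ∑ k ∈ range (x + 1), (‖1 - 1 / c‖ * r / (1 - r)) ^ k * x.choose k * (1 - r) ^ (-‖α‖) :=
        sum_le_sum fun k _ => (hp k).2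
    _ = _ := by
        rw [← sum_mul, mul_comm, add_comm 1, add_pow]
        simp only [one_pow, mul_one]

end Meixner

theorem hasSum_meixnerC_bilinear {α c z v : ℂ} (hα : ∀ i : ℕ, α + i ≠ 0) (hc : c ≠ 0)
    (hz : ‖z‖ < 1) (hv : ‖(c - z) / (1 - z) * v‖ < 1) :
    HasSum (fun x : ℕ => pochC α x / x.factorial * c ^ x *
        (∑' m : ℕ, pochC α m / m.factorial * MeixnerC m x α c * z ^ m) * v ^ x)
      ((1 - z) ^ (-α) * (1 - (c - z) / (1 - z) * v) ^ (-α)) := by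
  have hz0 := ne_zero_of_re_pos (re_one_sub_pos hz)
  refine ((hasSum_pochC_div_factorial_mul_pow α hv).mul_left ((1 - z) ^ (-α))).congr_fun
    fun x => ?_
  rw [(hasSum_meixnerC c x hα hz).tsum_eq,
    show (c - z) / (1 - z) = c * ((1 - z / c) / (1 - z)) by field_simp, mul_pow, mul_pow]
  ring

theorem summable_norm_meixnerC_bilinear {α c z K v : ℂ} (hα : ∀ i : ℕ, α + i ≠ 0) {r : ℝ}
    (hzr : ‖z‖ ≤ r) (hr : r < 1) (hv : ‖c‖ * (1 + ‖1 - 1 / c‖ * r / (1 - r)) * ‖v‖ < 1) :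
    Summable (fun q : ℕ × ℕ => ‖pochC α q.1 / q.1.factorial * c ^ q.1 *
      (pochC α q.2 / q.2.factorial * MeixnerC q.2 q.1 α c * z ^ q.2) * (K * v ^ q.1)‖) := by
  set S := 1 + ‖1 - 1 / c‖ * r / (1 - r)
  have hS : 0 ≤ S := by
    have : 0 < 1 - r := by linarith
    have : 0 ≤ r := (norm_nonneg z).trans hzr
    positivity
  have hrow : ∀ x : ℕ, (fun m => ‖pochC α x / x.factorial * c ^ x *
      (pochC α m / m.factorial * MeixnerC m x α c * z ^ m) * (K * v ^ x)‖) =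
      fun m => ‖pochC α x / x.factorial * c ^ x * (K * v ^ x)‖ *
        ‖pochC α m / m.factorial * MeixnerC m x α c * z ^ m‖ := fun x => by
    funext m
    simp only [norm_mul]
    ring
  refine (summable_prod_of_nonneg fun _ => norm_nonneg _).mpr ⟨fun x => ?_, ?_⟩
  · exact hrow x ▸ (summable_and_tsum_norm_meixnerC_le c x hα hzr hr).1.mul_left _
  have hmaj := ((hasSum_pochR_div_factorial_mul_pow ‖α‖
    (r := ‖c‖ * S * ‖v‖) (by rw [abs_of_nonneg (by positivity)]; exact hv)).mul_left
    (‖K‖ * (1 - r) ^ (-‖α‖))).summable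
  refine hmaj.of_nonneg_of_le (fun _ => tsum_nonneg fun _ => norm_nonneg _) fun x => ?_
  rw [hrow x, tsum_mul_left]
  calc _ ≤ pochR ‖α‖ x / x.factorial * ‖c‖ ^ x * (‖K‖ * ‖v‖ ^ x) * ((1 - r) ^ (-‖α‖) * S ^ x) := by
        have := pochR_nonneg (norm_nonneg α) x
        refine mul_le_mul ?_ (summable_and_tsum_norm_meixnerC_le c x hα hzr hr).2
          (tsum_nonneg fun _ => norm_nonneg _) (by positivity)
        have := norm_pochC_le_pochR le_rfl x (β := α)
        simp only [norm_mul, norm_div, norm_pow, norm_natCast]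
        gcongr
    _ = _ := by rw [mul_pow, mul_pow]; ring

lemma log_mul_mul_of_re_pos {a b d : ℂ} (ha : 0 < a.re) (hb : 0 < b.re) (hd : 0 < d.re)
    (habd : 0 < (a * b * d).re) : log (a * b * d) = log a + log b + log d := by
  obtain ⟨n, hn⟩ := exp_eq_exp_iff_exists_int.mp <|
    show exp (log (a * b * d)) = exp (log a + log b + log d) by
      rw [exp_add, exp_add, exp_log (ne_zero_of_re_pos habd), exp_log (ne_zero_of_re_pos ha),
        exp_log (ne_zero_of_re_pos hb), exp_log (ne_zero_of_re_pos hd)]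
  -- all four arguments lie in `(-π/2, π/2)`, so the two sides differ by less than `2π`
  have him : arg (a * b * d) = arg a + arg b + arg d + n * (2 * Real.pi) := by
    simpa [log_im] using congrArg im hn
  have bound : ∀ u : ℂ, 0 < u.re → |arg u| < Real.pi / 2 := fun u hu =>
    abs_arg_lt_pi_div_two_iff.mpr (Or.inl hu)
  have h1 := abs_lt.mp (bound _ habd)
  have h2 := abs_lt.mp (bound _ ha)
  have h3 := abs_lt.mp (bound _ hb)
  have h4 := abs_lt.mp (bound _ hd)
  have hn0 : n = 0 := by
    have hlt : (n : ℝ) < 1 := by nlinarith [Real.pi_pos]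
    have hgt : (-1 : ℝ) < n := by nlinarith [Real.pi_pos]
    have : n < 1 := by exact_mod_cast hlt
    have : -1 < n := by exact_mod_cast hgt
    omega
  simpa [hn0] using hn

theorem one_sub_mul_cpow_neg_eq {c : ℝ} (hc0 : 0 < c) (hc1 : c < 1) {w z : ℂ} (hw : ‖w‖ < 1)
    (hz : ‖z‖ < 1) (hT : ‖(c - z) / (1 - z) * ((1 - w) / (1 - c * w))‖ < 1) (s : ℂ) :
    (1 - w * z) ^ (-s) = (1 - c : ℂ) ^ s * ((1 - c * w) ^ (-s) *
      ((1 - z) ^ (-s) * (1 - (c - z) / (1 - z) * ((1 - w) / (1 - c * w))) ^ (-s))) := by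
  set T := (c - z) / (1 - z) * ((1 - w) / (1 - c * w))
  have hcw : ‖(c : ℂ) * w‖ < 1 := by
    rw [norm_mul, norm_real, Real.norm_of_nonneg hc0.le]
    nlinarith [norm_nonneg w]
  have hwz : ‖w * z‖ < 1 := by
    rw [norm_mul]
    nlinarith [norm_nonneg w, norm_nonneg z]
  have hz0 := ne_zero_of_re_pos (re_one_sub_pos hz)
  have hcw0 := ne_zero_of_re_pos (re_one_sub_pos hcw)
  have hprod : (1 - z) * (1 - c * w) * (1 - T) = ((1 - c : ℝ) : ℂ) * (1 - w * z) := by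
    simp only [T]
    field_simp
    push_cast
    ring
  have hlog : log (1 - z) + log (1 - c * w) + log (1 - T) = log (1 - c : ℂ) + log (1 - w * z) := by
    rw [← log_mul_mul_of_re_pos (re_one_sub_pos hz) (re_one_sub_pos hcw) (re_one_sub_pos hT),
      hprod, log_ofReal_mul (by linarith) (ne_zero_of_re_pos (re_one_sub_pos hwz)),
      ofReal_log (by linarith)]
    · push_cast; rfl
    · rw [hprod, re_ofReal_mul]
      exact mul_pos (by linarith) (re_one_sub_pos hwz)
  rw [cpow_def_of_ne_zero (ne_zero_of_re_pos (re_one_sub_pos hwz)),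
    cpow_def_of_ne_zero (by exact_mod_cast (sub_pos.mpr hc1).ne' : (1 - c : ℂ) ≠ 0),
    cpow_def_of_ne_zero hcw0, cpow_def_of_ne_zero hz0,
    cpow_def_of_ne_zero (ne_zero_of_re_pos (re_one_sub_pos hT)), ← exp_add, ← exp_add, ← exp_add]
  congr 1
  linear_combination s * hlog

lemma norm_sub_div_one_sub_mul_le {a d ε : ℝ} (hd : 0 ≤ d) (had : a * d ≤ 1) (hdε : d * ε < 1)
    {u : ℂ} (hu : ‖u‖ ≤ ε) :
    ‖(a - u) / (1 - d * u)‖ ≤ |a| + (1 - a * d) * ε / (1 - d * ε) := by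
  have hden : 1 - d * ε ≤ ‖1 - d * u‖ := calc
    1 - d * ε ≤ ‖(1 : ℂ)‖ - ‖(d : ℂ) * u‖ := by
      rw [norm_one, norm_mul, norm_real, Real.norm_of_nonneg hd]
      nlinarith
    _ ≤ _ := norm_sub_norm_le _ _
  have hne : (1 : ℂ) - d * u ≠ 0 := norm_pos_iff.mp (by linarith)
  have hsplit : (a - u) / (1 - d * u) = a - ((1 - a * d : ℝ) : ℂ) * (u / (1 - d * u)) := by
    rw [eq_sub_iff_add_eq, ← mul_div_assoc, ← add_div, div_eq_iff hne]
    push_cast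
    ring
  rw [hsplit]
  calc _ ≤ ‖(a : ℂ)‖ + ‖((1 - a * d : ℝ) : ℂ) * (u / (1 - d * u))‖ := norm_sub_le _ _
    _ = |a| + (1 - a * d) * (‖u‖ / ‖1 - d * u‖) := by
        rw [norm_mul, norm_div, norm_real, norm_real, Real.norm_eq_abs a,
          Real.norm_of_nonneg (show 0 ≤ 1 - a * d by linarith)]
    _ ≤ |a| + (1 - a * d) * (ε / (1 - d * ε)) := by
        have : 0 ≤ 1 - a * d := by linarith
        have : 0 ≤ ε := (norm_nonneg u).trans hu
        gcongr
    _ = _ := by ring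

theorem meixner_master_generating_function_two_general (α : ℝ) (hα : ∀ k : ℕ, α ≠ -(k : ℝ))
    (c : ℝ) (hc0 : 0 < c) (hc1 : c < 1) (ε : ℝ) (hε1 : ε < 1)
    (hεc : (c + (1 - c) * ε / (1 - ε)) * (1 + (1 - c) * ε / (1 - c * ε)) < 1)
    (w z : ℂ) (hw : ‖w‖ < ε) (hz : ‖z‖ < ε) :
    (1 - w * z) ^ (-(α : ℂ)) =
      ((1 - c : ℂ)) ^ (α : ℂ) *
        ∑' x : ℕ, (pochC (α : ℂ) x / (x.factorial : ℂ)) * (c : ℂ) ^ x *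
          (∑' m : ℕ, (pochC (α : ℂ) m / (m.factorial : ℂ)) * MeixnerC m x (α : ℂ) (c : ℂ) * z ^ m) *
          ((1 - (c : ℂ) * w) ^ (-(α : ℂ)) * (((1 - w) / (1 - (c : ℂ) * w)) ^ x)) ∧
    Summable (fun q : ℕ × ℕ =>
      ‖(pochC (α : ℂ) q.1 / (q.1.factorial : ℂ)) * (c : ℂ) ^ q.1 *
        ((pochC (α : ℂ) q.2 / (q.2.factorial : ℂ)) * MeixnerC q.2 q.1 (α : ℂ) (c : ℂ) * z ^ q.2) *
        ((1 - (c : ℂ) * w) ^ (-(α : ℂ)) * (((1 - w) / (1 - (c : ℂ) * w)) ^ q.1))‖) := by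
  have hα' : ∀ i : ℕ, (α : ℂ) + i ≠ 0 := fun i h =>
    hα i (by exact_mod_cast eq_neg_of_add_eq_zero_left h)
  have hP : ‖((c : ℂ) - z) / (1 - z)‖ ≤ c + (1 - c) * ε / (1 - ε) := by
    simpa [abs_of_pos hc0] using
      norm_sub_div_one_sub_mul_le (a := c) zero_le_one (by linarith) (by linarith) hz.le
  have hQ : ‖(1 - w) / (1 - (c : ℂ) * w)‖ ≤ 1 + (1 - c) * ε / (1 - c * ε) := by
    simpa using norm_sub_div_one_sub_mul_le (a := 1) hc0.le (by linarith)
      (by nlinarith [norm_nonneg w]) hw.le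
  have hP0 : 0 ≤ c + (1 - c) * ε / (1 - ε) := (norm_nonneg _).trans hP
  have hT : ‖((c : ℂ) - z) / (1 - z) * ((1 - w) / (1 - c * w))‖ < 1 :=
    (norm_mul_le_of_le hP hQ).trans_lt hεc
  have hcε : ‖(c : ℂ)‖ * (1 + ‖1 - 1 / (c : ℂ)‖ * ε / (1 - ε)) = c + (1 - c) * ε / (1 - ε) := by
    rw [show (1 : ℂ) - 1 / c = ((1 - 1 / c : ℝ) : ℂ) by push_cast; ring, norm_real, norm_real,
      Real.norm_of_nonneg hc0.le,
      Real.norm_of_nonpos (by rw [sub_nonpos, le_div_iff₀ hc0]; linarith)]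
    field_simp
    ring
  refine ⟨?_, summable_norm_meixnerC_bilinear hα' hz.le hε1
    (hcε ▸ (mul_le_mul_of_nonneg_left hQ hP0).trans_lt hεc)⟩
  rw [one_sub_mul_cpow_neg_eq hc0 hc1 (hw.trans hε1) (hz.trans hε1) hT,
    ← ((hasSum_meixnerC_bilinear hα' (ofReal_ne_zero.mpr hc0.ne') (hz.trans hε1) hT).mul_left
      _).tsum_eq]
  exact congrArg _ (tsum_congr fun x => by ring)

theorem meixner_master_generating_function_two (α : ℝ) (hα : ∀ k : ℕ, α ≠ -(k : ℝ))
    (c : ℝ) (hc0 : 0 < c) (hc1 : c < 1) (ε : ℝ) (hε0 : 0 < ε) (hε1 : ε < 1)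
    (hεc : (c + (1 - c) * ε / (1 - ε)) * (1 + (1 - c) * ε / (1 - c * ε)) < 1)
    (w z : ℂ) (hw : ‖w‖ < ε) (hz : ‖z‖ < ε) :
    (1 - w * z) ^ (-(α : ℂ)) =
      ((1 - c : ℂ)) ^ (α : ℂ) *
        ∑' x : ℕ, (pochC (α : ℂ) x / (x.factorial : ℂ)) * (c : ℂ) ^ x *
          (∑' m : ℕ, (pochC (α : ℂ) m / (m.factorial : ℂ)) * MeixnerC m x (α : ℂ) (c : ℂ) * z ^ m) *
          ((1 - (c : ℂ) * w) ^ (-(α : ℂ)) * (((1 - w) / (1 - (c : ℂ) * w)) ^ x)) ∧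
    Summable (fun q : ℕ × ℕ =>
      ‖(pochC (α : ℂ) q.1 / (q.1.factorial : ℂ)) * (c : ℂ) ^ q.1 *
        ((pochC (α : ℂ) q.2 / (q.2.factorial : ℂ)) * MeixnerC q.2 q.1 (α : ℂ) (c : ℂ) * z ^ q.2) *
        ((1 - (c : ℂ) * w) ^ (-(α : ℂ)) * (((1 - w) / (1 - (c : ℂ) * w)) ^ q.1))‖) :=
  meixner_master_generating_function_two_general α hα c hc0 hc1 ε hε1 hεc w z hw hz
end
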